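/- arXiv:1110.6913 — 5 statements merged into one kernel-verified Lean document; each statement's English description precedes it below -/
import Mathlib

section
/- Critical value formula: fix a graph G of finite degree, an edge e, and couplings J. Define the critical value C_e(σ) of a ground state σ ∈ 𝒢(J_e) as inf{y : σ ∈ 𝒢(J(e,y))} if σ_e = +1, and sup{y : σ ∈ 𝒢(J(e,y))} if σ_e = -1, where J(e,y) replaces J_e by y. Then σ_e · C_e(σ) = - inf over finite vertex sets A with e ∈ ∂A of ∑_{{z,w}∈∂A, {z,w}≠e} J_{zw} σ_z σ_w. In particular C_e(σ) does not depend on the value of J_e. -/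
open scoped BigOperators

noncomputable def spin (b : Bool) : ℝ := if b then 1 else -1

noncomputable def boundaryEnergy {V : Type*} [DecidableEq V] (G : SimpleGraph V)
    [G.LocallyFinite] (J : V → V → ℝ) (σ : V → Bool) (A : Finset V) : ℝ :=
  ∑ x ∈ A, ∑ y ∈ (G.neighborFinset x).filter (fun y => y ∉ A),
    J x y * spin (σ x) * spin (σ y)

def IsGroundState {V : Type*} [DecidableEq V] (G : SimpleGraph V) [G.LocallyFinite]
    (J : V → V → ℝ) (σ : V → Bool) : Prop :=
  ∀ A : Finset V, 0 ≤ boundaryEnergy G J σ A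

/-- The coupling configuration `J(e,y)`: equal to `J` off the edge `{u,v}` and to `y` there. -/
noncomputable def updateCoupling {V : Type*} [DecidableEq V] (J : V → V → ℝ) (u v : V)
    (y : ℝ) : V → V → ℝ :=
  fun x z => if s(x, z) = s(u, v) then y else J x z

/-- The critical value `C_e(J,σ)` of the edge `e = {u,v}` in `σ`:
`inf {y : σ ∈ 𝒢(J(e,y))}` if `σ_e = +1`, and `sup {y : σ ∈ 𝒢(J(e,y))}` if `σ_e = -1`. -/
noncomputable def criticalValue {V : Type*} [DecidableEq V] (G : SimpleGraph V)
    [G.LocallyFinite] (J : V → V → ℝ) (σ : V → Bool) (u v : V) : ℝ :=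
  if spin (σ u) * spin (σ v) = 1 then
    sInf {y : ℝ | IsGroundState G (updateCoupling J u v y) σ}
  else sSup {y : ℝ | IsGroundState G (updateCoupling J u v y) σ}

/-- The boundary energy of `A` with the contribution of the edge `{u,v}` removed. -/
noncomputable def partialBoundaryEnergy {V : Type*} [DecidableEq V] (G : SimpleGraph V)
    [G.LocallyFinite] (J : V → V → ℝ) (σ : V → Bool) (u v : V) (A : Finset V) : ℝ :=
  ∑ x ∈ A, ∑ y ∈ (G.neighborFinset x).filter (fun y => y ∉ A ∧ s(x, y) ≠ s(u, v)),
    J x y * spin (σ x) * spin (σ y)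

/-! ### Auxiliary lemmas -/

lemma filter_eq_u {V : Type*} [DecidableEq V] (G : SimpleGraph V) [G.LocallyFinite]
    {u v : V} (huv : G.Adj u v) (A : Finset V) :
    (G.neighborFinset u).filter (fun z => z ∉ A ∧ s(u,z) = s(u,v))
      = if v ∈ A then (∅ : Finset V) else {v} := by
  have hne : u ≠ v := huv.ne
  ext z
  by_cases hz : v ∈ A
  · simp only [hz, if_true, Finset.notMem_empty, iff_false,
      Finset.mem_filter, G.mem_neighborFinset, Sym2.eq_iff]
    rintro ⟨_, hzA, (⟨-, rfl⟩ | ⟨rfl, rfl⟩)⟩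
    · exact hzA hz
    · exact hne rfl
  · simp only [hz, if_false, Finset.mem_singleton,
      Finset.mem_filter, G.mem_neighborFinset, Sym2.eq_iff]
    constructor
    · rintro ⟨_, _, (⟨-, rfl⟩ | ⟨rfl, rfl⟩)⟩
      · rfl
      · exact absurd rfl hne
    · rintro rfl; exact ⟨huv, hz, Or.inl ⟨trivial, rfl⟩⟩

lemma filter_eq_v {V : Type*} [DecidableEq V] (G : SimpleGraph V) [G.LocallyFinite]
    {u v : V} (huv : G.Adj u v) (A : Finset V) :
    (G.neighborFinset v).filter (fun z => z ∉ A ∧ s(v,z) = s(u,v))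
      = if u ∈ A then (∅ : Finset V) else {u} := by
  have hne : u ≠ v := huv.ne
  ext z
  by_cases hz : u ∈ A
  · simp only [hz, if_true, Finset.notMem_empty, iff_false,
      Finset.mem_filter, G.mem_neighborFinset, Sym2.eq_iff]
    rintro ⟨_, hzA, (⟨rfl, rfl⟩ | ⟨-, rfl⟩)⟩
    · exact hne rfl
    · exact hzA hz
  · simp only [hz, if_false, Finset.mem_singleton,
      Finset.mem_filter, G.mem_neighborFinset, Sym2.eq_iff]
    constructor
    · rintro ⟨_, _, (⟨rfl, rfl⟩ | ⟨-, rfl⟩)⟩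
      · exact absurd rfl hne
      · rfl
    · rintro rfl; exact ⟨huv.symm, hz, Or.inr ⟨trivial, rfl⟩⟩

lemma filter_eq_other {V : Type*} [DecidableEq V] (G : SimpleGraph V) [G.LocallyFinite]
    {u v x : V} (hxu : x ≠ u) (hxv : x ≠ v) (A : Finset V) :
    (G.neighborFinset x).filter (fun z => z ∉ A ∧ s(x,z) = s(u,v))
      = (∅ : Finset V) := by
  ext z
  simp only [Finset.notMem_empty, iff_false, Finset.mem_filter, G.mem_neighborFinset,
    Sym2.eq_iff]
  rintro ⟨_, _, (⟨rfl, rfl⟩ | ⟨rfl, rfl⟩)⟩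
  · exact hxu rfl
  · exact hxv rfl

/-- Decomposition of the boundary energy into the partial boundary energy and the
contribution of the edge `{u, v}`. -/
lemma bE_decomp {V : Type*} [DecidableEq V] (G : SimpleGraph V)
    [G.LocallyFinite] {u v : V} (huv : G.Adj u v) (J : V → V → ℝ)
    (hJsymm : ∀ x y, J x y = J y x) (σ : V → Bool) (A : Finset V) :
    boundaryEnergy G J σ A = partialBoundaryEnergy G J σ u v A +
      (if (u ∈ A ∧ v ∉ A) ∨ (v ∈ A ∧ u ∉ A) then J u v * spin (σ u) * spin (σ v) else 0) := by
  have hne : u ≠ v := huv.ne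
  set f : V → V → ℝ := fun x z => J x z * spin (σ x) * spin (σ z) with hf
  have hsplit : ∀ x ∈ A,
      ∑ z ∈ (G.neighborFinset x).filter (fun z => z ∉ A), f x z
      = (∑ z ∈ (G.neighborFinset x).filter (fun z => z ∉ A ∧ s(x,z) ≠ s(u,v)), f x z)
      + (∑ z ∈ (G.neighborFinset x).filter (fun z => z ∉ A ∧ s(x,z) = s(u,v)), f x z) := by
    intro x _
    have := Finset.sum_filter_add_sum_filter_not
      ((G.neighborFinset x).filter (fun z => z ∉ A)) (fun z => s(x,z) ≠ s(u,v)) (f x)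
    rw [Finset.filter_filter, Finset.filter_filter] at this
    simp only [not_not] at this
    exact this.symm
  have hinner : ∀ x ∈ A,
      ∑ z ∈ (G.neighborFinset x).filter (fun z => z ∉ A ∧ s(x,z) = s(u,v)), f x z
      = (if x = u then (if v ∈ A then 0 else f u v) else 0)
        + (if x = v then (if u ∈ A then 0 else f v u) else 0) := by
    intro x _
    by_cases hxu : x = u
    · subst hxu
      rw [filter_eq_u G huv A]
      by_cases hz : v ∈ A <;> simp [hz, hne]
    · by_cases hxv : x = v
      · subst hxv
        rw [filter_eq_v G huv A]
        by_cases hz : u ∈ A <;> simp [hz, hxu]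
      · rw [filter_eq_other G hxu hxv A]
        simp [hxu, hxv]
  have hfvu : f v u = J u v * spin (σ u) * spin (σ v) := by
    simp only [hf]; rw [hJsymm v u]; ring
  calc boundaryEnergy G J σ A
      = ∑ x ∈ A, ((∑ z ∈ (G.neighborFinset x).filter (fun z => z ∉ A ∧ s(x,z) ≠ s(u,v)), f x z)
        + (∑ z ∈ (G.neighborFinset x).filter (fun z => z ∉ A ∧ s(x,z) = s(u,v)), f x z)) :=
        Finset.sum_congr rfl hsplit
    _ = partialBoundaryEnergy G J σ u v A
        + ∑ x ∈ A, ((if x = u then (if v ∈ A then 0 else f u v) else 0)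
          + (if x = v then (if u ∈ A then 0 else f v u) else 0)) := by
        rw [Finset.sum_add_distrib]
        congr 1
        exact Finset.sum_congr rfl hinner
    _ = partialBoundaryEnergy G J σ u v A +
      (if (u ∈ A ∧ v ∉ A) ∨ (v ∈ A ∧ u ∉ A) then J u v * spin (σ u) * spin (σ v) else 0) := by
        congr 1
        rw [Finset.sum_add_distrib, Finset.sum_ite_eq' A u, Finset.sum_ite_eq' A v]
        by_cases hu : u ∈ A <;> by_cases hv : v ∈ A <;> simp [hu, hv, hf] <;>
          (rw [hJsymm v u]; ring)

lemma pbe_update {V : Type*} [DecidableEq V] (G : SimpleGraph V) [G.LocallyFinite]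
    (J : V → V → ℝ) (σ : V → Bool) (u v : V) (y : ℝ) (A : Finset V) :
    partialBoundaryEnergy G (updateCoupling J u v y) σ u v A
      = partialBoundaryEnergy G J σ u v A := by
  unfold partialBoundaryEnergy
  refine Finset.sum_congr rfl fun x _ => Finset.sum_congr rfl fun z hz => ?_
  simp only [Finset.mem_filter] at hz
  rw [updateCoupling, if_neg hz.2.2]

lemma updateCoupling_symm {V : Type*} [DecidableEq V] (J : V → V → ℝ)
    (hJsymm : ∀ x y, J x y = J y x) (u v : V) (y : ℝ) :
    ∀ x z, updateCoupling J u v y x z = updateCoupling J u v y z x := by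
  intro x z
  unfold updateCoupling
  rw [hJsymm x z, Sym2.eq_swap (a := x) (b := z)]

lemma updateCoupling_apply {V : Type*} [DecidableEq V] (J : V → V → ℝ) (u v : V) (y : ℝ) :
    updateCoupling J u v y u v = y := by
  simp [updateCoupling]

lemma updateCoupling_update {V : Type*} [DecidableEq V] (J : V → V → ℝ) (u v : V) (y y' : ℝ) :
    updateCoupling (updateCoupling J u v y) u v y' = updateCoupling J u v y' := by
  funext x z
  by_cases h : s(x,z) = s(u,v) <;> simp [updateCoupling, h]

/-- Critical value formula: `σ_e C_e(σ) = -inf_{A : e ∈ ∂A} ∑_{{z,w} ∈ ∂A, {z,w} ≠ e} J σσ`,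
and in particular `C_e` does not depend on the value of the coupling at `e`. -/
theorem criticalValue_formula {V : Type*} [DecidableEq V] (G : SimpleGraph V)
    [G.LocallyFinite] (u v : V) (huv : G.Adj u v) (J : V → V → ℝ)
    (hJsymm : ∀ x y, J x y = J y x) (σ : V → Bool) (hσ : IsGroundState G J σ) :
    spin (σ u) * spin (σ v) * criticalValue G J σ u v =
      - sInf {r : ℝ | ∃ A : Finset V,
          ((u ∈ A ∧ v ∉ A) ∨ (v ∈ A ∧ u ∉ A)) ∧ r = partialBoundaryEnergy G J σ u v A} ∧
    ∀ y : ℝ, criticalValue G (updateCoupling J u v y) σ u v = criticalValue G J σ u v := by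
  have hne : u ≠ v := huv.ne
  set S : Set ℝ := {r : ℝ | ∃ A : Finset V,
      ((u ∈ A ∧ v ∉ A) ∨ (v ∈ A ∧ u ∉ A)) ∧ r = partialBoundaryEnergy G J σ u v A} with hS
  have hSne : S.Nonempty := by
    refine ⟨partialBoundaryEnergy G J σ u v {u}, {u}, Or.inl ⟨Finset.mem_singleton_self u, ?_⟩, rfl⟩
    simp [hne.symm]
  have hSbdd : BddBelow S := by
    refine ⟨-(J u v * spin (σ u) * spin (σ v)), ?_⟩
    rintro r ⟨A, hA, rfl⟩
    have h0 := hσ A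
    rw [bE_decomp G huv J hJsymm σ A, if_pos hA] at h0
    linarith
  set I : ℝ := sInf S with hI
  set e : ℝ := spin (σ u) * spin (σ v) with he
  have heor : e = 1 ∨ e = -1 := by
    rw [he]; unfold spin; cases σ u <;> cases σ v <;> norm_num
  -- characterization of the ground-state set
  have hchar : ∀ y : ℝ, IsGroundState G (updateCoupling J u v y) σ ↔ -I ≤ y * e := by
    intro y
    constructor
    · intro h
      have hle : -(y * e) ≤ I := by
        refine le_csInf hSne ?_
        rintro r ⟨A, hA, rfl⟩
        have h0 := h A
        rw [bE_decomp G huv (updateCoupling J u v y) (updateCoupling_symm J hJsymm u v y) σ A,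
          pbe_update, if_pos hA, updateCoupling_apply] at h0
        have : y * spin (σ u) * spin (σ v) = y * e := by rw [he, mul_assoc]
        linarith [h0, this ▸ h0]
      linarith
    · intro h A
      rw [bE_decomp G huv (updateCoupling J u v y) (updateCoupling_symm J hJsymm u v y) σ A,
        pbe_update]
      by_cases hA : (u ∈ A ∧ v ∉ A) ∨ (v ∈ A ∧ u ∉ A)
      · rw [if_pos hA, updateCoupling_apply]
        have h1 : I ≤ partialBoundaryEnergy G J σ u v A := csInf_le hSbdd ⟨A, hA, rfl⟩
        have h2 : y * spin (σ u) * spin (σ v) = y * e := by rw [he, mul_assoc]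
        rw [h2]
        linarith
      · rw [if_neg hA, add_zero]
        have h0 := hσ A
        rwa [bE_decomp G huv J hJsymm σ A, if_neg hA, add_zero] at h0
  constructor
  · rcases heor with h1 | h1
    · have hset : {y : ℝ | IsGroundState G (updateCoupling J u v y) σ} = Set.Ici (-I) := by
        ext y; rw [Set.mem_setOf_eq, hchar y, h1, mul_one]; rfl
      rw [criticalValue, ← he, if_pos h1, hset, csInf_Ici, h1, one_mul]
    · have hset : {y : ℝ | IsGroundState G (updateCoupling J u v y) σ} = Set.Iic I := by
        ext y
        rw [Set.mem_setOf_eq, hchar y, h1]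
        constructor
        · intro h; simp only [Set.mem_Iic]; linarith
        · intro h; simp only [Set.mem_Iic] at h; linarith
      rw [criticalValue, ← he, if_neg (by rw [h1]; norm_num), hset, csSup_Iic, h1]
      ring
  · intro y
    have hupd : ∀ y' : ℝ, updateCoupling (updateCoupling J u v y) u v y'
        = updateCoupling J u v y' := fun y' => updateCoupling_update J u v y y'
    simp only [criticalValue, hupd]
end

section
/- Flip correspondence via critical droplets: let σ ∈ 𝒢_{+e} and let Λ be a critical droplet for e in σ, i.e., there exist finite vertex sets Λ_n → Λ with e ∈ ∂Λ_n and -∑_{{x,y}∈∂Λ_n, {x,y}≠e} J_{xy}σ_xσ_y → σ_e C_e(σ). Define σ̃ by σ̃_v = -σ_v for v ∈ Λ and σ̃_v = σ_v otherwise. Then σ̃ ∈ 𝒢_{-e} and C_e(σ̃) ≥ C_e(σ). -/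
open scoped BigOperators

/-- Ground state on the graph minus the edge `{u,v}`: the ground state inequality is
required only for finite sets `A` whose edge boundary does not contain `{u,v}`. -/
def IsGroundStateOff {V : Type*} [DecidableEq V] (G : SimpleGraph V) [G.LocallyFinite]
    (J : V → V → ℝ) (σ : V → Bool) (u v : V) : Prop :=
  ∀ A : Finset V, (u ∈ A ↔ v ∈ A) → 0 ≤ boundaryEnergy G J σ A

/-! ### Auxiliary lemmas -/

lemma spin_neg (b : Bool) : spin (!b) = -spin b := by cases b <;> simp [spin]
lemma abs_spin (b : Bool) : |spin b| = 1 := by cases b <;> simp [spin]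

section PairSum
variable {V : Type*} [DecidableEq V] (G : SimpleGraph V) [G.LocallyFinite]

noncomputable def pairSum (Ω : Finset V) (F : V → V → ℝ) : ℝ :=
  ∑ x ∈ Ω, ∑ y ∈ Ω ∩ G.neighborFinset x, F x y

lemma pairSum_eq_ite (Ω : Finset V) (F : V → V → ℝ) :
    pairSum G Ω F = ∑ x ∈ Ω, ∑ y ∈ Ω, if y ∈ G.neighborFinset x then F x y else 0 := by
  refine Finset.sum_congr rfl fun x _ => (Finset.sum_ite_mem _ _ _).symm

lemma pairSum_swap (Ω : Finset V) (F : V → V → ℝ) :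
    pairSum G Ω F = pairSum G Ω (fun x y => F y x) := by
  rw [pairSum_eq_ite, pairSum_eq_ite, Finset.sum_comm]
  refine Finset.sum_congr rfl fun x _ => Finset.sum_congr rfl fun y _ => ?_
  refine if_congr ?_ rfl rfl
  simp [SimpleGraph.mem_neighborFinset, G.adj_comm]

lemma pairSum_add (Ω : Finset V) (F F' : V → V → ℝ) :
    pairSum G Ω (fun x y => F x y + F' x y) = pairSum G Ω F + pairSum G Ω F' := by
  simp [pairSum, Finset.sum_add_distrib]

lemma pairSum_sub (Ω : Finset V) (F F' : V → V → ℝ) :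
    pairSum G Ω (fun x y => F x y - F' x y) = pairSum G Ω F - pairSum G Ω F' := by
  simp [pairSum, Finset.sum_sub_distrib]

lemma pairSum_le (Ω : Finset V) (F F' : V → V → ℝ)
    (h : ∀ x ∈ Ω, ∀ y ∈ Ω, G.Adj x y → F x y + F y x ≤ F' x y + F' y x) :
    pairSum G Ω F ≤ pairSum G Ω F' := by
  have h2 : pairSum G Ω (fun x y => F x y + F y x) ≤ pairSum G Ω (fun x y => F' x y + F' y x) := by
    refine Finset.sum_le_sum fun x hx => Finset.sum_le_sum fun y hy => ?_
    have hyΩ : y ∈ Ω := (Finset.mem_inter.mp hy).1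
    have hadj : G.Adj x y := by
      have := (Finset.mem_inter.mp hy).2
      rwa [SimpleGraph.mem_neighborFinset] at this
    exact h x hx y hyΩ hadj
  rw [pairSum_add, pairSum_add, ← pairSum_swap G Ω F, ← pairSum_swap G Ω F'] at h2
  linarith

lemma pairSum_congr (Ω : Finset V) (F F' : V → V → ℝ)
    (h : ∀ x ∈ Ω, ∀ y ∈ Ω, G.Adj x y → F x y + F y x = F' x y + F' y x) :
    pairSum G Ω F = pairSum G Ω F' :=
  le_antisymm (pairSum_le G Ω F F' fun x hx y hy ha => (h x hx y hy ha).le)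
    (pairSum_le G Ω F' F fun x hx y hy ha => (h x hx y hy ha).ge)

lemma filterSum_eq_pairSum (u v : V) (w : V → V → ℝ) (A Ω : Finset V) (hA : A ⊆ Ω)
    (hN : ∀ x ∈ A, G.neighborFinset x ⊆ Ω) :
    ∑ x ∈ A, ∑ y ∈ (G.neighborFinset x).filter (fun y => y ∉ A ∧ s(x, y) ≠ s(u, v)), w x y
      = pairSum G Ω (fun x y => if x ∈ A ∧ y ∉ A ∧ s(x, y) ≠ s(u, v) then w x y else 0) := by
  rw [pairSum]
  rw [← Finset.sum_subset hA (fun x _ hx => Finset.sum_eq_zero fun y _ => by simp [hx])]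
  refine Finset.sum_congr rfl fun x hx => ?_
  rw [Finset.inter_eq_right.mpr (hN x hx), Finset.sum_filter]
  exact Finset.sum_congr rfl fun y _ => by simp [hx]

lemma flip_identity (u v : V) (J : V → V → ℝ) (hJsymm : ∀ x y, J x y = J y x)
    (σ σt : V → Bool) (Λ : Set V)
    (hσt : ∀ x : V, (x ∈ Λ → σt x = !(σ x)) ∧ (x ∉ Λ → σt x = σ x))
    (A L : Finset V)
    (hagree : ∀ x ∈ A ∪ A.biUnion (fun z => G.neighborFinset z), (x ∈ L ↔ x ∈ Λ)) :
    partialBoundaryEnergy G J σt u v A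
      = partialBoundaryEnergy G J σ u v (symmDiff A L) - partialBoundaryEnergy G J σ u v L := by
  classical
  set Ω := (A ∪ L) ∪ (A ∪ L).biUnion (fun z => G.neighborFinset z) with hΩ
  have hsubA : A ⊆ Ω := fun x hx => Finset.mem_union_left _ (Finset.mem_union_left _ hx)
  have hsubL : L ⊆ Ω := fun x hx => Finset.mem_union_left _ (Finset.mem_union_right _ hx)
  have hsubB : symmDiff A L ⊆ Ω := fun x hx => by
    rcases Finset.mem_symmDiff.mp hx with ⟨h, -⟩ | ⟨h, -⟩
    · exact hsubA h
    · exact hsubL h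
  have hNgen : ∀ x ∈ A ∪ L, G.neighborFinset x ⊆ Ω := fun x hx y hy =>
    Finset.mem_union_right _ (Finset.mem_biUnion.mpr ⟨x, hx, hy⟩)
  have hNA : ∀ x ∈ A, G.neighborFinset x ⊆ Ω := fun x hx => hNgen x (Finset.mem_union_left _ hx)
  have hNL : ∀ x ∈ L, G.neighborFinset x ⊆ Ω := fun x hx => hNgen x (Finset.mem_union_right _ hx)
  have hNB : ∀ x ∈ symmDiff A L, G.neighborFinset x ⊆ Ω := fun x hx => hNgen x (by
    rcases Finset.mem_symmDiff.mp hx with ⟨h, -⟩ | ⟨h, -⟩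
    · exact Finset.mem_union_left _ h
    · exact Finset.mem_union_right _ h)
  unfold partialBoundaryEnergy
  rw [filterSum_eq_pairSum G u v _ A Ω hsubA hNA,
      filterSum_eq_pairSum G u v _ (symmDiff A L) Ω hsubB hNB,
      filterSum_eq_pairSum G u v _ L Ω hsubL hNL,
      ← pairSum_sub]
  refine pairSum_congr G Ω _ _ fun x hx y hy hadj => ?_
  have hAg : (x ∈ A ∨ y ∈ A) → ((x ∈ L ↔ x ∈ Λ) ∧ (y ∈ L ↔ y ∈ Λ)) := by
    intro h
    constructor
    · refine hagree x ?_
      rcases h with h | h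
      · exact Finset.mem_union_left _ h
      · exact Finset.mem_union_right _
          (Finset.mem_biUnion.mpr ⟨y, h, (SimpleGraph.mem_neighborFinset _ _ _).mpr hadj.symm⟩)
    · refine hagree y ?_
      rcases h with h | h
      · exact Finset.mem_union_right _
          (Finset.mem_biUnion.mpr ⟨x, h, (SimpleGraph.mem_neighborFinset _ _ _).mpr hadj⟩)
      · exact Finset.mem_union_left _ h
  by_cases he : s(x, y) = s(u, v)
  · have he' : s(y, x) = s(u, v) := by rwa [Sym2.eq_swap]
    simp [he, he']
  · have he' : ¬ s(y, x) = s(u, v) := by rwa [Sym2.eq_swap]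
    by_cases hxA : x ∈ A <;> by_cases hyA : y ∈ A
    · obtain ⟨h1, h2⟩ := hAg (Or.inl hxA)
      have tx : spin (σt x) = if x ∈ L then -spin (σ x) else spin (σ x) := by
        by_cases hxL : x ∈ L
        · rw [if_pos hxL, (hσt x).1 (h1.mp hxL), spin_neg]
        · rw [if_neg hxL, (hσt x).2 (fun h => hxL (h1.mpr h))]
      have ty : spin (σt y) = if y ∈ L then -spin (σ y) else spin (σ y) := by
        by_cases hyL : y ∈ L
        · rw [if_pos hyL, (hσt y).1 (h2.mp hyL), spin_neg]
        · rw [if_neg hyL, (hσt y).2 (fun h => hyL (h2.mpr h))]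
      by_cases hxL : x ∈ L <;> by_cases hyL : y ∈ L <;>
        · simp [Finset.mem_symmDiff, hxA, hyA, hxL, hyL, he, he', tx, ty, hJsymm y x]
          try ring
    · obtain ⟨h1, h2⟩ := hAg (Or.inl hxA)
      have tx : spin (σt x) = if x ∈ L then -spin (σ x) else spin (σ x) := by
        by_cases hxL : x ∈ L
        · rw [if_pos hxL, (hσt x).1 (h1.mp hxL), spin_neg]
        · rw [if_neg hxL, (hσt x).2 (fun h => hxL (h1.mpr h))]
      have ty : spin (σt y) = if y ∈ L then -spin (σ y) else spin (σ y) := by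
        by_cases hyL : y ∈ L
        · rw [if_pos hyL, (hσt y).1 (h2.mp hyL), spin_neg]
        · rw [if_neg hyL, (hσt y).2 (fun h => hyL (h2.mpr h))]
      by_cases hxL : x ∈ L <;> by_cases hyL : y ∈ L <;>
        · simp [Finset.mem_symmDiff, hxA, hyA, hxL, hyL, he, he', tx, ty, hJsymm y x]
          try ring
    · obtain ⟨h1, h2⟩ := hAg (Or.inr hyA)
      have tx : spin (σt x) = if x ∈ L then -spin (σ x) else spin (σ x) := by
        by_cases hxL : x ∈ L
        · rw [if_pos hxL, (hσt x).1 (h1.mp hxL), spin_neg]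
        · rw [if_neg hxL, (hσt x).2 (fun h => hxL (h1.mpr h))]
      have ty : spin (σt y) = if y ∈ L then -spin (σ y) else spin (σ y) := by
        by_cases hyL : y ∈ L
        · rw [if_pos hyL, (hσt y).1 (h2.mp hyL), spin_neg]
        · rw [if_neg hyL, (hσt y).2 (fun h => hyL (h2.mpr h))]
      by_cases hxL : x ∈ L <;> by_cases hyL : y ∈ L <;>
        · simp [Finset.mem_symmDiff, hxA, hyA, hxL, hyL, he, he', tx, ty, hJsymm y x]
          try ring
    · by_cases hxL : x ∈ L <;> by_cases hyL : y ∈ L <;>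
        · simp [Finset.mem_symmDiff, hxA, hyA, hxL, hyL, he, he', hJsymm y x]
          try ring

lemma key_ineq (u v : V) (J : V → V → ℝ) (hJsymm : ∀ x y, J x y = J y x)
    (σ : V → Bool) (A D : Finset V) :
    partialBoundaryEnergy G J σ u v (symmDiff A D) + partialBoundaryEnergy G J σ u v D
      ≤ partialBoundaryEnergy G J σ u v A
        + 2 * ∑ x ∈ D, ∑ y ∈ (G.neighborFinset x).filter (fun y => y ∉ D ∧ s(x, y) ≠ s(u, v)), |J x y| := by
  classical
  set Ω := (A ∪ D) ∪ (A ∪ D).biUnion (fun z => G.neighborFinset z) with hΩ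
  have hsubA : A ⊆ Ω := fun x hx => Finset.mem_union_left _ (Finset.mem_union_left _ hx)
  have hsubD : D ⊆ Ω := fun x hx => Finset.mem_union_left _ (Finset.mem_union_right _ hx)
  have hsubB : symmDiff A D ⊆ Ω := fun x hx => by
    rcases Finset.mem_symmDiff.mp hx with ⟨h, -⟩ | ⟨h, -⟩
    · exact hsubA h
    · exact hsubD h
  have hNgen : ∀ x ∈ A ∪ D, G.neighborFinset x ⊆ Ω := fun x hx y hy =>
    Finset.mem_union_right _ (Finset.mem_biUnion.mpr ⟨x, hx, hy⟩)
  have hNA : ∀ x ∈ A, G.neighborFinset x ⊆ Ω := fun x hx => hNgen x (Finset.mem_union_left _ hx)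
  have hND : ∀ x ∈ D, G.neighborFinset x ⊆ Ω := fun x hx => hNgen x (Finset.mem_union_right _ hx)
  have hNB : ∀ x ∈ symmDiff A D, G.neighborFinset x ⊆ Ω := fun x hx => hNgen x (by
    rcases Finset.mem_symmDiff.mp hx with ⟨h, -⟩ | ⟨h, -⟩
    · exact Finset.mem_union_left _ h
    · exact Finset.mem_union_right _ h)
  unfold partialBoundaryEnergy
  rw [filterSum_eq_pairSum G u v _ A Ω hsubA hNA,
      filterSum_eq_pairSum G u v _ (symmDiff A D) Ω hsubB hNB,
      filterSum_eq_pairSum G u v (fun x y => J x y * spin (σ x) * spin (σ y)) D Ω hsubD hND,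
      filterSum_eq_pairSum G u v (fun x y => |J x y|) D Ω hsubD hND,
      ← pairSum_add, two_mul, ← pairSum_add, ← pairSum_add]
  refine pairSum_le G Ω _ _ fun x hx y hy hadj => ?_
  by_cases he : s(x, y) = s(u, v)
  · have he' : s(y, x) = s(u, v) := by rwa [Sym2.eq_swap]
    simp [he, he']
  · have he' : ¬ s(y, x) = s(u, v) := by rwa [Sym2.eq_swap]
    have habs : |J x y * spin (σ x) * spin (σ y)| = |J x y| := by
      rw [abs_mul, abs_mul, abs_spin, abs_spin, mul_one, mul_one]
    have hle : J x y * spin (σ x) * spin (σ y) ≤ |J x y| := habs ▸ le_abs_self _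
    have hge : -|J x y| ≤ J x y * spin (σ x) * spin (σ y) := habs ▸ neg_abs_le _
    have habs0 : (0:ℝ) ≤ |J x y| := abs_nonneg _
    by_cases hxA : x ∈ A <;> by_cases hyA : y ∈ A <;> by_cases hxD : x ∈ D <;> by_cases hyD : y ∈ D <;>
      · simp [Finset.mem_symmDiff, hxA, hyA, hxD, hyD, he, he', hJsymm y x, abs_sub_comm]
        try linarith

lemma updateCoupling_self (u v : V) (J : V → V → ℝ) (hJsymm : ∀ x y, J x y = J y x) :
    updateCoupling J u v (J u v) = J := by
  funext x z
  unfold updateCoupling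
  split
  · next h =>
    rw [Sym2.eq_iff] at h
    rcases h with ⟨rfl, rfl⟩ | ⟨rfl, rfl⟩
    · rfl
    · exact hJsymm z x
  · rfl

lemma bE_update (u v : V) (huv : G.Adj u v) (J : V → V → ℝ) (σ' : V → Bool) (yy : ℝ)
    (A : Finset V) :
    boundaryEnergy G (updateCoupling J u v yy) σ' A
      = partialBoundaryEnergy G J σ' u v A
        + ((if u ∈ A ∧ v ∉ A then yy * spin (σ' u) * spin (σ' v) else 0)
        + (if v ∈ A ∧ u ∉ A then yy * spin (σ' v) * spin (σ' u) else 0)) := by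
  classical
  have hne : u ≠ v := huv.ne
  unfold boundaryEnergy partialBoundaryEnergy
  have split1 : ∀ x ∈ A,
      ∑ y ∈ (G.neighborFinset x).filter (fun y => y ∉ A), updateCoupling J u v yy x y * spin (σ' x) * spin (σ' y)
      = (∑ y ∈ (G.neighborFinset x).filter (fun y => y ∉ A ∧ s(x, y) ≠ s(u, v)), J x y * spin (σ' x) * spin (σ' y))
        + ∑ y ∈ (G.neighborFinset x).filter (fun y => y ∉ A ∧ s(x, y) = s(u, v)), yy * spin (σ' x) * spin (σ' y) := by
    intro x _
    rw [← Finset.sum_filter_add_sum_filter_not ((G.neighborFinset x).filter (fun y => y ∉ A))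
      (fun y => s(x, y) = s(u, v)), Finset.filter_filter, Finset.filter_filter]
    rw [add_comm]
    congr 1
    · refine Finset.sum_congr rfl fun y hy => ?_
      rw [Finset.mem_filter] at hy
      rw [updateCoupling]
      simp only [if_neg hy.2.2]
    · refine Finset.sum_congr rfl fun y hy => ?_
      rw [Finset.mem_filter] at hy
      rw [updateCoupling]
      simp only [if_pos hy.2.2]
  rw [Finset.sum_congr rfl split1, Finset.sum_add_distrib]
  congr 1
  have inner : ∀ x ∈ A,
      ∑ y ∈ (G.neighborFinset x).filter (fun y => y ∉ A ∧ s(x, y) = s(u, v)), yy * spin (σ' x) * spin (σ' y)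
      = (if x = u then (if v ∉ A then yy * spin (σ' u) * spin (σ' v) else 0) else 0)
        + (if x = v then (if u ∉ A then yy * spin (σ' v) * spin (σ' u) else 0) else 0) := by
    intro x hxA
    by_cases hxu : x = u
    · obtain rfl := hxu.symm
      have hmem : ∀ y, y ∈ (G.neighborFinset u).filter (fun y => y ∉ A ∧ s(u, y) = s(u, v)) ↔ (y = v ∧ v ∉ A) := by
        intro y
        rw [Finset.mem_filter, SimpleGraph.mem_neighborFinset]
        constructor
        · rintro ⟨hadj, hyA, hs⟩
          rcases Sym2.eq_iff.mp hs with ⟨-, rfl⟩ | ⟨h1, rfl⟩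
          · exact ⟨rfl, hyA⟩
          · exact absurd h1 hne
        · rintro ⟨rfl, hvA⟩
          exact ⟨huv, hvA, Sym2.eq_iff.mpr (Or.inl ⟨rfl, rfl⟩)⟩
      by_cases hvA : v ∈ A
      · have he : (G.neighborFinset u).filter (fun y => y ∉ A ∧ s(u, y) = s(u, v)) = ∅ :=
          Finset.eq_empty_of_forall_notMem fun y hy => ((hmem y).mp hy).2 hvA
        rw [he]
        simp [hvA, hne]
      · have he : (G.neighborFinset u).filter (fun y => y ∉ A ∧ s(u, y) = s(u, v)) = {v} := by
          ext y
          rw [hmem y, Finset.mem_singleton]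
          simp [hvA]
        rw [he]
        simp [hvA, hne]
    · by_cases hxv : x = v
      · obtain rfl := hxv.symm
        have hmem : ∀ y, y ∈ (G.neighborFinset v).filter (fun y => y ∉ A ∧ s(v, y) = s(u, v)) ↔ (y = u ∧ u ∉ A) := by
          intro y
          rw [Finset.mem_filter, SimpleGraph.mem_neighborFinset]
          constructor
          · rintro ⟨hadj, hyA, hs⟩
            rcases Sym2.eq_iff.mp hs with ⟨h1, rfl⟩ | ⟨-, rfl⟩
            · exact absurd h1.symm hne
            · exact ⟨rfl, hyA⟩
          · rintro ⟨rfl, hyA⟩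
            exact ⟨huv.symm, hyA, Sym2.eq_iff.mpr (Or.inr ⟨rfl, rfl⟩)⟩
        by_cases huA : u ∈ A
        · have he : (G.neighborFinset v).filter (fun y => y ∉ A ∧ s(v, y) = s(u, v)) = ∅ :=
            Finset.eq_empty_of_forall_notMem fun y hy => ((hmem y).mp hy).2 huA
          rw [he]
          simp [huA, hxu]
        · have he : (G.neighborFinset v).filter (fun y => y ∉ A ∧ s(v, y) = s(u, v)) = {u} := by
            ext y
            rw [hmem y, Finset.mem_singleton]
            simp [huA]
          rw [he]
          simp [huA, hxu]
      · have he : (G.neighborFinset x).filter (fun y => y ∉ A ∧ s(x, y) = s(u, v)) = ∅ := by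
          refine Finset.eq_empty_of_forall_notMem fun y hy => ?_
          rw [Finset.mem_filter] at hy
          rcases Sym2.eq_iff.mp hy.2.2 with ⟨h1, -⟩ | ⟨h1, -⟩
          · exact hxu h1
          · exact hxv h1
        rw [if_neg hxu, if_neg hxv, he]
        simp
  rw [Finset.sum_congr rfl inner, Finset.sum_add_distrib]
  congr 1
  · rw [Finset.sum_ite_eq' A u]
    by_cases h1 : u ∈ A <;> by_cases h2 : v ∈ A <;> simp [h1, h2]
  · rw [Finset.sum_ite_eq' A v]
    by_cases h1 : v ∈ A <;> by_cases h2 : u ∈ A <;> simp [h1, h2]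

end PairSum

lemma notP_of_iff {p q : Prop} (h : p ↔ q) : ¬((p ∧ ¬q) ∨ (q ∧ ¬p)) := by tauto

lemma iff_of_notP {p q : Prop} (h : ¬((p ∧ ¬q) ∨ (q ∧ ¬p))) : p ↔ q := by tauto

lemma mem_symmDiff_parity1 {V : Type*} [DecidableEq V] {u v : V} {A L : Finset V}
    (h1 : ¬((u ∈ A ∧ v ∉ A) ∨ (v ∈ A ∧ u ∉ A))) (h2 : (u ∈ L ∧ v ∉ L) ∨ (v ∈ L ∧ u ∉ L)) :
    (u ∈ symmDiff A L ∧ v ∉ symmDiff A L) ∨ (v ∈ symmDiff A L ∧ u ∉ symmDiff A L) := by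
  simp only [Finset.mem_symmDiff]
  tauto

lemma mem_symmDiff_parity2 {V : Type*} [DecidableEq V] {u v : V} {A L : Finset V}
    (h1 : (u ∈ A ∧ v ∉ A) ∨ (v ∈ A ∧ u ∉ A)) (h2 : (u ∈ L ∧ v ∉ L) ∨ (v ∈ L ∧ u ∉ L)) :
    u ∈ symmDiff A L ↔ v ∈ symmDiff A L := by
  simp only [Finset.mem_symmDiff]
  tauto

set_option maxHeartbeats 1000000

/-- Flip correspondence via critical droplets: if `σ ∈ 𝒢_{+e}` and `Λ` is a critical
droplet for `e = {u,v}` in `σ` (a limit of finite sets `Λ_n` with `e ∈ ∂Λ_n` whose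
boundary energies off `e` infimize to `-σ_e C_e(σ)`), then the configuration `σ̃`
obtained by flipping `σ` on `Λ` satisfies `σ̃ ∈ 𝒢_{-e}` and `C_e(σ̃) ≥ C_e(σ)`. -/
theorem flip_correspondence {V : Type*} [DecidableEq V] (G : SimpleGraph V)
    [G.LocallyFinite] (u v : V) (huv : G.Adj u v) (J : V → V → ℝ)
    (hJsymm : ∀ x y, J x y = J y x) (σ : V → Bool)
    (hσ : IsGroundStateOff G J σ u v) (hσe : spin (σ u) * spin (σ v) = 1)
    (Λ : Set V) (Λn : ℕ → Finset V)
    (hconv : ∀ x : V, {n : ℕ | ¬(x ∈ Λn n ↔ x ∈ Λ)}.Finite)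
    (hbdry : ∀ n, (u ∈ Λn n ∧ v ∉ Λn n) ∨ (v ∈ Λn n ∧ u ∉ Λn n))
    (hlim : Filter.Tendsto (fun n => -(partialBoundaryEnergy G J σ u v (Λn n)))
      Filter.atTop
      (nhds (spin (σ u) * spin (σ v) * criticalValue G J σ u v)))
    (σt : V → Bool)
    (hσt : ∀ x : V, (x ∈ Λ → σt x = !(σ x)) ∧ (x ∉ Λ → σt x = σ x)) :
    IsGroundStateOff G J σt u v ∧ spin (σt u) * spin (σt v) = -1 ∧
      criticalValue G J σ u v ≤ criticalValue G J σt u v := by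
  classical
  -- agreement extraction
  have hagree : ∀ K : Finset V, ∃ N : ℕ, ∀ n ≥ N, ∀ x ∈ K, (x ∈ Λn n ↔ x ∈ Λ) := by
    intro K
    have hfin : (⋃ x ∈ (K : Set V), {n : ℕ | ¬(x ∈ Λn n ↔ x ∈ Λ)}).Finite :=
      Set.Finite.biUnion K.finite_toSet (fun x _ => hconv x)
    obtain ⟨N, hN⟩ := hfin.bddAbove
    refine ⟨N + 1, fun n hn x hxK => ?_⟩
    by_contra hcon
    have hmem : n ∈ ⋃ x ∈ (K : Set V), {n : ℕ | ¬(x ∈ Λn n ↔ x ∈ Λ)} :=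
      Set.mem_biUnion hxK hcon
    have := hN hmem
    omega
  -- exactly one of u, v lies in Λ
  obtain ⟨N0, hN0⟩ := hagree {u, v}
  have huvΛ : (u ∈ Λ ∧ v ∉ Λ) ∨ (v ∈ Λ ∧ u ∉ Λ) := by
    have h1 := hN0 N0 le_rfl u (by simp)
    have h2 := hN0 N0 le_rfl v (by simp)
    rcases hbdry N0 with ⟨h3, h4⟩ | ⟨h3, h4⟩
    · exact Or.inl ⟨h1.mp h3, fun h => h4 (h2.mpr h)⟩
    · exact Or.inr ⟨h2.mp h3, fun h => h4 (h1.mpr h)⟩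
  have goal2 : spin (σt u) * spin (σt v) = -1 := by
    rcases huvΛ with ⟨h1, h2⟩ | ⟨h1, h2⟩
    · rw [(hσt u).1 h1, (hσt v).2 h2, spin_neg]
      have : -spin (σ u) * spin (σ v) = -(spin (σ u) * spin (σ v)) := by ring
      rw [this, hσe]
    · rw [(hσt v).1 h1, (hσt u).2 h2, spin_neg]
      have : spin (σ u) * -spin (σ v) = -(spin (σ u) * spin (σ v)) := by ring
      rw [this, hσe]
  -- boundary energy equals partial boundary energy when the edge is not in the boundary
  have hbE_pBE : ∀ (σ' : V → Bool) (A : Finset V), ¬((u ∈ A ∧ v ∉ A) ∨ (v ∈ A ∧ u ∉ A)) →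
      boundaryEnergy G J σ' A = partialBoundaryEnergy G J σ' u v A := by
    intro σ' A hP
    have h := bE_update G u v huv J σ' (J u v) A
    rw [updateCoupling_self u v J hJsymm] at h
    rw [h, if_neg (fun hh => hP (Or.inl hh)), if_neg (fun hh => hP (Or.inr hh))]
    ring
  set S : Set ℝ := {y : ℝ | IsGroundState G (updateCoupling J u v y) σ} with hSdef
  have hC : criticalValue G J σ u v = sInf S := by
    unfold criticalValue
    rw [if_pos hσe, ← hSdef]
  set C := sInf S with hCdef
  have hyuv : ∀ z : ℝ, z * spin (σ u) * spin (σ v) = z := fun z => by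
    rw [mul_assoc, hσe, mul_one]
  have hyvu : ∀ z : ℝ, z * spin (σ v) * spin (σ u) = z := fun z => by
    rw [mul_assoc, mul_comm (spin (σ v)), hσe, mul_one]
  have htuv : ∀ z : ℝ, z * spin (σt u) * spin (σt v) = -z := fun z => by
    rw [mul_assoc, goal2]; ring
  have htvu : ∀ z : ℝ, z * spin (σt v) * spin (σt u) = -z := fun z => by
    rw [mul_assoc, mul_comm (spin (σt v)), goal2]; ring
  -- membership characterization of S
  have hmemS : ∀ y : ℝ, y ∈ S ↔ ∀ A : Finset V, ((u ∈ A ∧ v ∉ A) ∨ (v ∈ A ∧ u ∉ A)) →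
      -partialBoundaryEnergy G J σ u v A ≤ y := by
    intro y
    constructor
    · intro hy A hP
      have h0 : 0 ≤ boundaryEnergy G (updateCoupling J u v y) σ A := hy A
      rw [bE_update G u v huv J σ y A] at h0
      rcases hP with ⟨h1, h2⟩ | ⟨h1, h2⟩
      · rw [if_pos ⟨h1, h2⟩, if_neg (fun hh => h2 hh.1), hyuv] at h0
        linarith
      · rw [if_neg (fun hh => h2 hh.1), if_pos ⟨h1, h2⟩, hyvu] at h0
        linarith
    · intro h
      intro A
      rw [bE_update G u v huv J σ y A]
      by_cases hP : (u ∈ A ∧ v ∉ A) ∨ (v ∈ A ∧ u ∉ A)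
      · have hA := h A hP
        rcases hP with ⟨h1, h2⟩ | ⟨h1, h2⟩
        · rw [if_pos ⟨h1, h2⟩, if_neg (fun hh => h2 hh.1), hyuv]
          linarith
        · rw [if_neg (fun hh => h2 hh.1), if_pos ⟨h1, h2⟩, hyvu]
          linarith
      · rw [if_neg (fun hh => hP (Or.inl hh)), if_neg (fun hh => hP (Or.inr hh))]
        have hbe := hbE_pBE σ A hP
        have h0 := hσ A (iff_of_notP hP)
        linarith
  -- S is nonempty
  have hPD0 : (u ∈ Λn 0 ∧ v ∉ Λn 0) ∨ (v ∈ Λn 0 ∧ u ∉ Λn 0) := hbdry 0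
  set M : ℝ := -partialBoundaryEnergy G J σ u v (Λn 0)
      + 2 * ∑ x ∈ Λn 0, ∑ y ∈ (G.neighborFinset x).filter
          (fun y => y ∉ Λn 0 ∧ s(x, y) ≠ s(u, v)), |J x y| with hM
  have hMS : M ∈ S := by
    rw [hmemS]
    intro A hPA
    have hkey := key_ineq G u v J hJsymm σ A (Λn 0)
    have hiff : u ∈ symmDiff A (Λn 0) ↔ v ∈ symmDiff A (Λn 0) :=
      mem_symmDiff_parity2 hPA hPD0
    have h0 : 0 ≤ partialBoundaryEnergy G J σ u v (symmDiff A (Λn 0)) := by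
      rw [← hbE_pBE σ _ (notP_of_iff hiff)]
      exact hσ _ hiff
    rw [hM]
    linarith
  -- lower bound for C
  have hCge : ∀ B : Finset V, ((u ∈ B ∧ v ∉ B) ∨ (v ∈ B ∧ u ∉ B)) →
      -partialBoundaryEnergy G J σ u v B ≤ C := by
    intro B hB
    exact le_csInf ⟨M, hMS⟩ fun y hy => (hmemS y).mp hy B hB
  -- the limit, rewritten
  have hlim' : Filter.Tendsto (fun n => -partialBoundaryEnergy G J σ u v (Λn n))
      Filter.atTop (nhds C) := by
    have heq : spin (σ u) * spin (σ v) * criticalValue G J σ u v = C := by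
      rw [hσe, one_mul, hC]
    rw [heq] at hlim
    exact hlim
  -- the flip identity, eventually in n
  have hflip : ∀ A : Finset V, ∃ N : ℕ, ∀ n ≥ N,
      partialBoundaryEnergy G J σt u v A
        = partialBoundaryEnergy G J σ u v (symmDiff A (Λn n))
          - partialBoundaryEnergy G J σ u v (Λn n) := by
    intro A
    obtain ⟨N, hN⟩ := hagree (A ∪ A.biUnion (fun z => G.neighborFinset z))
    exact ⟨N, fun n hn =>
      flip_identity G u v J hJsymm σ σt Λ hσt A (Λn n) (fun x hxk => hN n hn x hxk)⟩
  -- Goal 1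
  have goal1 : IsGroundStateOff G J σt u v := by
    intro A hA
    have hPA : ¬((u ∈ A ∧ v ∉ A) ∨ (v ∈ A ∧ u ∉ A)) := notP_of_iff hA
    rw [hbE_pBE σt A hPA]
    obtain ⟨N, hN⟩ := hflip A
    have hev : ∀ n ≥ N, -C - partialBoundaryEnergy G J σ u v (Λn n)
        ≤ partialBoundaryEnergy G J σt u v A := by
      intro n hn
      have hPB : (u ∈ symmDiff A (Λn n) ∧ v ∉ symmDiff A (Λn n)) ∨
          (v ∈ symmDiff A (Λn n) ∧ u ∉ symmDiff A (Λn n)) :=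
        mem_symmDiff_parity1 hPA (hbdry n)
      have hle := hCge (symmDiff A (Λn n)) hPB
      rw [hN n hn]
      linarith
    have ht : Filter.Tendsto (fun n => -C - partialBoundaryEnergy G J σ u v (Λn n))
        Filter.atTop (nhds 0) := by
      have h2 : Filter.Tendsto (fun n => -C + -partialBoundaryEnergy G J σ u v (Λn n))
          Filter.atTop (nhds (-C + C)) := Filter.Tendsto.const_add _ hlim'
      simpa [sub_eq_add_neg] using h2
    exact le_of_tendsto ht (Filter.eventually_atTop.mpr ⟨N, hev⟩)
  refine ⟨goal1, goal2, ?_⟩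
  -- Goal 3
  set S' : Set ℝ := {y : ℝ | IsGroundState G (updateCoupling J u v y) σt} with hS'def
  have hC' : criticalValue G J σt u v = sSup S' := by
    unfold criticalValue
    rw [goal2, if_neg (by norm_num), ← hS'def]
  have hpt : ∀ A : Finset V, ((u ∈ A ∧ v ∉ A) ∨ (v ∈ A ∧ u ∉ A)) →
      C ≤ partialBoundaryEnergy G J σt u v A := by
    intro A hPA
    obtain ⟨N, hN⟩ := hflip A
    have hev : ∀ n ≥ N, -partialBoundaryEnergy G J σ u v (Λn n)
        ≤ partialBoundaryEnergy G J σt u v A := by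
      intro n hn
      have hiff : u ∈ symmDiff A (Λn n) ↔ v ∈ symmDiff A (Λn n) :=
        mem_symmDiff_parity2 hPA (hbdry n)
      have h0 : 0 ≤ partialBoundaryEnergy G J σ u v (symmDiff A (Λn n)) := by
        rw [← hbE_pBE σ _ (notP_of_iff hiff)]
        exact hσ _ hiff
      rw [hN n hn]
      linarith
    exact le_of_tendsto hlim' (Filter.eventually_atTop.mpr ⟨N, hev⟩)
  have hCS' : C ∈ S' := by
    rw [hS'def, Set.mem_setOf_eq]
    intro A
    rw [bE_update G u v huv J σt C A]
    by_cases hP : (u ∈ A ∧ v ∉ A) ∨ (v ∈ A ∧ u ∉ A)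
    · have h1 := hpt A hP
      rcases hP with ⟨ha, hb⟩ | ⟨ha, hb⟩
      · rw [if_pos ⟨ha, hb⟩, if_neg (fun hh => hb hh.1), htuv]
        linarith
      · rw [if_neg (fun hh => hb hh.1), if_pos ⟨ha, hb⟩, htvu]
        linarith
    · rw [if_neg (fun hh => hP (Or.inl hh)), if_neg (fun hh => hP (Or.inr hh))]
      have h0 := goal1 A (iff_of_notP hP)
      rw [hbE_pBE σt A hP] at h0
      linarith
  have hbdd : BddAbove S' := by
    refine ⟨partialBoundaryEnergy G J σt u v (Λn 0), fun y hy => ?_⟩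
    have hy' : IsGroundState G (updateCoupling J u v y) σt := hy
    have h0 := hy' (Λn 0)
    rw [bE_update G u v huv J σt y (Λn 0)] at h0
    rcases hPD0 with ⟨ha, hb⟩ | ⟨ha, hb⟩
    · rw [if_pos ⟨ha, hb⟩, if_neg (fun hh => hb hh.1), htuv] at h0
      linarith
    · rw [if_neg (fun hh => hb hh.1), if_pos ⟨ha, hb⟩, htvu] at h0
      linarith
  rw [hC, hC']
  exact le_csSup hbdd hCS'
end

section
/- Let M be a probability measure of the form ν(dJ) μ_J on pairs (J,σ) with σ ∈ 𝒢(J), satisfying the monotonicity property. Let e be an edge and A ⊆ ℝ^E × {σ : σ_e = +1} a measurable event such that (J,σ) ∈ A implies (J(e,s),σ) ∈ A for all s ≥ J_e. Then for every λ ∈ ℝ, M(A ∩ {J_e ≥ λ}) ≥ (1/2) ν([λ,∞)) M(A). -/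
open scoped BigOperators ENNReal
open MeasureTheory

/-!
Write `J = T (J', y)`, where `T` resets the coupling at `e` to `y` and `y ∼ ν_e` is independent
of `J'`. For fixed `J'` the weight `h y = μ_{T (J', y)} (A)` is nondecreasing in `y`, by the
monotonicity property and the stability of `A`. For nondecreasing `h` one has
`∫_{y ≥ λ} h ≥ ν_e [λ, ∞) · max (∫_{y ≥ λ} h, ∫_{y < λ} h)`, because
`h ≥ (∫_{y < λ} h) / ν_e (-∞, λ)` on `[λ, ∞)`; this gives the factor `1/2`.

Nothing makes `J ↦ μ_J (A_J)` measurable, so all integrals are lower integrals: the fibrewise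
bound is applied to a measurable minorant, and the change of variables `J ↔ (J', y)` holds for
arbitrary integrands because `(J', y) ↦ (T (J', y), J'_e)` is a measure-preserving involution of
`ν ⊗ ν_e` (up to a null set).
-/

open Set

lemma setLIntegral_Iio_div_le_of_monotone {ν : Measure ℝ} {w h : ℝ → ℝ≥0∞} (hwh : w ≤ h)
    (hh : Monotone h) {lam y : ℝ} (hy : lam ≤ y) :
    (∫⁻ t in Iio lam, w t ∂ν) / ν (Iio lam) ≤ h y := by
  refine ENNReal.div_le_of_le_mul ?_
  calc ∫⁻ t in Iio lam, w t ∂ν ≤ ∫⁻ _ in Iio lam, h y ∂ν :=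
        setLIntegral_mono' measurableSet_Iio fun t ht => (hwh t).trans (hh (ht.out.le.trans hy))
    _ = h y * ν (Iio lam) := setLIntegral_const _ _

lemma half_mul_lintegral_le_setLIntegral_Ici_max (ν : Measure ℝ) [IsProbabilityMeasure ν]
    (w : ℝ → ℝ≥0∞) (lam : ℝ) :
    1 / 2 * ν (Ici lam) * ∫⁻ y, w y ∂ν ≤
      ∫⁻ y in Ici lam, max (w y) ((∫⁻ t in Iio lam, w t ∂ν) / ν (Iio lam)) ∂ν := by
  set c := (∫⁻ t in Iio lam, w t ∂ν) / ν (Iio lam)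
  set R := ∫⁻ y in Ici lam, max (w y) c ∂ν
  have high : ν (Ici lam) * ∫⁻ y in Ici lam, w y ∂ν ≤ R :=
    calc ν (Ici lam) * ∫⁻ y in Ici lam, w y ∂ν ≤ ∫⁻ y in Ici lam, w y ∂ν :=
          mul_le_of_le_one_left' prob_le_one
      _ ≤ R := setLIntegral_mono' measurableSet_Ici fun _ _ => le_max_left _ _
  have low : ν (Ici lam) * ∫⁻ y in Iio lam, w y ∂ν ≤ R :=
    calc ν (Ici lam) * ∫⁻ y in Iio lam, w y ∂ν ≤ c * ν (Ici lam) := by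
          rw [mul_comm]
          gcongr
          simpa using ENNReal.div_le_div_left (prob_le_one (μ := ν) (s := Iio lam))
            (∫⁻ y in Iio lam, w y ∂ν)
      _ = ∫⁻ _ in Ici lam, c ∂ν := (setLIntegral_const _ _).symm
      _ ≤ R := setLIntegral_mono' measurableSet_Ici fun _ _ => le_max_right _ _
  calc 1 / 2 * ν (Ici lam) * ∫⁻ y, w y ∂ν
      = 1 / 2 * (ν (Ici lam) * ∫⁻ y in Iio lam, w y ∂ν) +
          1 / 2 * (ν (Ici lam) * ∫⁻ y in Ici lam, w y ∂ν) := by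
        rw [← lintegral_add_compl w measurableSet_Iio, compl_Iio]
        ring
    _ ≤ 1 / 2 * R + 1 / 2 * R := by gcongr
    _ = R := by rw [← add_mul, ENNReal.add_halves, one_mul]

lemma half_mul_lintegral_prod_le_setLIntegral_of_monotone {α : Type*} [MeasurableSpace α]
    (μ : Measure α) [SFinite μ] (ν : Measure ℝ) [IsProbabilityMeasure ν]
    (N : α × ℝ → ℝ≥0∞) (hN : ∀ a, Monotone fun y => N (a, y)) (lam : ℝ) :
    1 / 2 * ν (Ici lam) * ∫⁻ z, N z ∂(μ.prod ν) ≤ ∫⁻ z in univ ×ˢ Ici lam, N z ∂(μ.prod ν) := by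
  obtain ⟨w, hw, hwN, hwN_eq⟩ := exists_measurable_le_lintegral_eq (μ.prod ν) N
  set c : α → ℝ≥0∞ := fun a => (∫⁻ t in Iio lam, w (a, t) ∂ν) / ν (Iio lam)
  have hc : Measurable c := (hw.lintegral_prod_right' (ν := ν.restrict (Iio lam))).div_const _
  calc 1 / 2 * ν (Ici lam) * ∫⁻ z, N z ∂(μ.prod ν)
      = ∫⁻ a, 1 / 2 * ν (Ici lam) * ∫⁻ y, w (a, y) ∂ν ∂μ := by
        rw [hwN_eq, lintegral_prod _ hw.aemeasurable,
          lintegral_const_mul _ hw.lintegral_prod_right']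
    _ ≤ ∫⁻ a, ∫⁻ y in Ici lam, max (w (a, y)) (c a) ∂ν ∂μ :=
        lintegral_mono fun a => half_mul_lintegral_le_setLIntegral_Ici_max ν _ lam
    _ = ∫⁻ z in univ ×ˢ Ici lam, max (w z) (c z.1) ∂(μ.prod ν) := by
        rw [setLIntegral_prod (fun z => max (w z) (c z.1))
          (hw.max (hc.comp measurable_fst)).aemeasurable, Measure.restrict_univ]
    _ ≤ ∫⁻ z in univ ×ˢ Ici lam, N z ∂(μ.prod ν) :=
        setLIntegral_mono' (MeasurableSet.univ.prod measurableSet_Ici) fun z hz =>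
          max_le (hwN z) (setLIntegral_Iio_div_le_of_monotone (fun t => hwN (z.1, t)) (hN z.1) hz.2)

lemma measurePreserving_prod_right_comm {α β γ : Type*} [MeasurableSpace α] [MeasurableSpace β]
    [MeasurableSpace γ] (μ : Measure α) [SFinite μ] (ν : Measure β) [SFinite ν]
    (ρ : Measure γ) [SFinite ρ] :
    MeasurePreserving (fun q : (α × β) × γ => ((q.1.1, q.2), q.1.2))
      ((μ.prod ν).prod ρ) ((μ.prod ρ).prod ν) :=
  ((measurePreserving_prodAssoc μ ρ ν).symm MeasurableEquiv.prodAssoc).comp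
    (((MeasurePreserving.id μ).prod Measure.measurePreserving_swap).comp
      (measurePreserving_prodAssoc μ ν ρ))

/-- `T (x, y)` is `x` with its `π`-coordinate reset to `y`; that `T` carries `ν ⊗ νe` to `ν`
encodes that under `ν` this coordinate is `νe`-distributed and independent of the others. -/
structure IsResampling {X : Type*} [MeasurableSpace X] (ν : Measure X) (νe : Measure ℝ)
    (π : X → ℝ) (T : X × ℝ → X) : Prop where
  measurePreserving : MeasurePreserving T (ν.prod νe) ν
  measurable_coord : Measurable π
  coord_apply : ∀ x y, π (T (x, y)) = y
  apply_apply : ∀ x y y', T (T (x, y), y') = T (x, y')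
  ae_apply_coord : ∀ᵐ x ∂ν, T (x, π x) = x

namespace IsResampling

variable {X : Type*} [MeasurableSpace X] {ν : Measure X} [SFinite ν] {νe : Measure ℝ}
  {π : X → ℝ} {T : X × ℝ → X}

lemma measurePreserving_swap_coord [SFinite νe] (h : IsResampling ν νe π T) :
    MeasurePreserving (fun z : X × ℝ => (T z, π z.1)) (ν.prod νe) (ν.prod νe) :=
  (h.measurePreserving.prod (MeasurePreserving.id νe)).of_semiconj
    (measurePreserving_prod_right_comm ν νe νe)
    (fun ⟨⟨x, t⟩, y⟩ => by simp [h.apply_apply, h.coord_apply])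
    (h.measurePreserving.measurable.prodMk (h.measurable_coord.comp measurable_fst))

lemma lintegral_comp [IsProbabilityMeasure νe] (h : IsResampling ν νe π T) (f : X → ℝ≥0∞) :
    ∫⁻ z, f (T z) ∂(ν.prod νe) = ∫⁻ x, f x ∂ν := by
  set Φ := fun z : X × ℝ => (T z, π z.1)
  have hΦΦ : ∀ᵐ z ∂(ν.prod νe), Φ (Φ z) = z :=
    (Measure.quasiMeasurePreserving_fst.ae h.ae_apply_coord).mono fun z hz => by
      simp [Φ, h.apply_apply, h.coord_apply, hz]
  apply le_antisymm
  · calc ∫⁻ z, f (T z) ∂(ν.prod νe) = ∫⁻ z, f (Φ z).1 ∂(Measure.map Φ (ν.prod νe)) := by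
          rw [h.measurePreserving_swap_coord.map_eq]
      _ ≤ ∫⁻ z, f (Φ (Φ z)).1 ∂(ν.prod νe) := lintegral_map_le _ _
      _ = ∫⁻ z, f z.1 ∂(ν.prod νe) :=
          lintegral_congr_ae (hΦΦ.mono fun z hz => congrArg (fun p => f p.1) hz)
      _ ≤ ∫⁻ x, ∫⁻ _, f x ∂νe ∂ν := lintegral_prod_le _
      _ = ∫⁻ x, f x ∂ν := by simp
  · calc ∫⁻ x, f x ∂ν = ∫⁻ x, f x ∂(Measure.map T (ν.prod νe)) := by
          rw [h.measurePreserving.map_eq]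
      _ ≤ ∫⁻ z, f (T z) ∂(ν.prod νe) := lintegral_map_le f T

theorem half_mul_lintegral_le_setLIntegral [IsProbabilityMeasure νe] (h : IsResampling ν νe π T)
    (g : X → ℝ≥0∞) (hg : ∀ x, Monotone fun y => g (T (x, y))) (lam : ℝ) :
    1 / 2 * νe (Ici lam) * ∫⁻ x, g x ∂ν ≤ ∫⁻ x in {x | lam ≤ π x}, g x ∂ν := by
  have hS : MeasurableSet {x | lam ≤ π x} := measurableSet_le measurable_const h.measurable_coord
  have hpre : T ⁻¹' {x | lam ≤ π x} = univ ×ˢ Ici lam := by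
    ext ⟨x, y⟩
    simp [h.coord_apply]
  calc 1 / 2 * νe (Ici lam) * ∫⁻ x, g x ∂ν
      = 1 / 2 * νe (Ici lam) * ∫⁻ z, g (T z) ∂(ν.prod νe) := by rw [h.lintegral_comp]
    _ ≤ ∫⁻ z in univ ×ˢ Ici lam, g (T z) ∂(ν.prod νe) :=
        half_mul_lintegral_prod_le_setLIntegral_of_monotone ν νe (g ∘ T) hg lam
    _ = ∫⁻ z, {x | lam ≤ π x}.indicator g (T z) ∂(ν.prod νe) := by
        rw [← hpre, ← lintegral_indicator (hS.preimage h.measurePreserving.measurable)]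
        simp_rw [← indicator_comp_right]
        rfl
    _ = ∫⁻ x in {x | lam ≤ π x}, g x ∂ν := by rw [h.lintegral_comp, lintegral_indicator hS]

end IsResampling

section UpdateCoupling

variable {V : Type*} [DecidableEq V]

@[simp]
lemma updateCoupling_apply_self (J : V → V → ℝ) (u v : V) (y : ℝ) :
    updateCoupling J u v y u v = y := by
  simp [updateCoupling]

@[simp]
lemma updateCoupling_apply_swap (J : V → V → ℝ) (u v : V) (y : ℝ) :
    updateCoupling J u v y v u = y := by
  simp [updateCoupling, Sym2.eq_swap]

@[simp]
lemma updateCoupling_updateCoupling (J : V → V → ℝ) (u v : V) (y y' : ℝ) :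
    updateCoupling (updateCoupling J u v y) u v y' = updateCoupling J u v y' := by
  funext x z
  by_cases h : s(x, z) = s(u, v) <;> simp [updateCoupling, h]

lemma updateCoupling_apply_self_eq {J : V → V → ℝ} {u v : V} (hJ : J u v = J v u) :
    updateCoupling J u v (J u v) = J := by
  funext x z
  unfold updateCoupling
  split_ifs with h
  · rcases Sym2.eq_iff.1 h with ⟨rfl, rfl⟩ | ⟨rfl, rfl⟩
    exacts [rfl, hJ]
  · rfl

lemma isResampling_updateCoupling {u v : V} {ν : Measure (V → V → ℝ)} {νe : Measure ℝ}
    (hprod : MeasurePreserving (fun p : (V → V → ℝ) × ℝ => updateCoupling p.1 u v p.2)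
      (ν.prod νe) ν) :
    IsResampling ν νe (fun J => J u v) (fun p => updateCoupling p.1 u v p.2) where
  measurePreserving := hprod
  measurable_coord := by fun_prop
  coord_apply _ _ := updateCoupling_apply_self _ _ _ _
  apply_apply _ _ _ := updateCoupling_updateCoupling _ _ _ _ _
  ae_apply_coord := by
    have hsymm : ∀ᵐ J ∂ν, J u v = J v u := by
      rw [← hprod.map_eq, ae_map_iff hprod.aemeasurable (measurableSet_eq_fun (by fun_prop)
        (by fun_prop))]
      exact ae_of_all _ fun p => by simp
    exact hsymm.mono fun J hJ => updateCoupling_apply_self_eq hJ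

lemma monotone_measure_updateCoupling {u v : V} (μ : (V → V → ℝ) → Measure (V → Bool))
    (hmono : ∀ J : V → V → ℝ, ∀ y : ℝ, J u v ≤ y → ∀ B : Set (V → Bool),
      (∀ σ ∈ B, spin (σ u) * spin (σ v) = 1) → μ J B ≤ μ (updateCoupling J u v y) B)
    {A : Set ((V → V → ℝ) × (V → Bool))}
    (hAspin : ∀ p ∈ A, spin (p.2 u) * spin (p.2 v) = 1)
    (hAraise : ∀ p ∈ A, ∀ s : ℝ, p.1 u v ≤ s → (updateCoupling p.1 u v s, p.2) ∈ A)
    (J : V → V → ℝ) :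
    Monotone fun y => μ (updateCoupling J u v y) {σ | (updateCoupling J u v y, σ) ∈ A} := by
  intro y y' hyy'
  have hsub : {σ | (updateCoupling J u v y, σ) ∈ A} ⊆ {σ | (updateCoupling J u v y', σ) ∈ A} :=
    fun σ hσ => by
      simpa using hAraise _ hσ y' (by simpa using hyy')
  calc μ (updateCoupling J u v y) {σ | (updateCoupling J u v y, σ) ∈ A}
      ≤ μ (updateCoupling J u v y) {σ | (updateCoupling J u v y', σ) ∈ A} := measure_mono hsub
    _ ≤ μ (updateCoupling (updateCoupling J u v y) u v y')
          {σ | (updateCoupling J u v y', σ) ∈ A} :=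
        hmono _ y' (by simpa using hyy') _ fun σ hσ => hAspin _ hσ
    _ = μ (updateCoupling J u v y') {σ | (updateCoupling J u v y', σ) ∈ A} := by
        rw [updateCoupling_updateCoupling]

end UpdateCoupling

theorem coupling_raise_estimate_general {V : Type*} [DecidableEq V]
    (u v : V)
    (ν : Measure (V → V → ℝ)) [IsProbabilityMeasure ν]
    (νe : Measure ℝ) [IsProbabilityMeasure νe]
    (hprod : MeasurePreserving
      (fun p : (V → V → ℝ) × ℝ => updateCoupling p.1 u v p.2) (ν.prod νe) ν)
    (μ : (V → V → ℝ) → Measure (V → Bool))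
    (hmono : ∀ J : V → V → ℝ, ∀ y : ℝ, J u v ≤ y → ∀ B : Set (V → Bool),
      (∀ σ ∈ B, spin (σ u) * spin (σ v) = 1) → μ J B ≤ μ (updateCoupling J u v y) B)
    (A : Set ((V → V → ℝ) × (V → Bool)))
    (hAspin : ∀ p ∈ A, spin (p.2 u) * spin (p.2 v) = 1)
    (hAraise : ∀ p ∈ A, ∀ s : ℝ, p.1 u v ≤ s → (updateCoupling p.1 u v s, p.2) ∈ A)
    (lam : ℝ) :
    (1 / 2 : ℝ≥0∞) * νe (Set.Ici lam) * (∫⁻ J, μ J {σ | (J, σ) ∈ A} ∂ν) ≤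
      ∫⁻ J in {J : V → V → ℝ | lam ≤ J u v}, μ J {σ | (J, σ) ∈ A} ∂ν :=
  (isResampling_updateCoupling hprod).half_mul_lintegral_le_setLIntegral _
    (monotone_measure_updateCoupling μ hmono hAspin hAraise) lam

/-- Lemma on coupling modification: let `M = ν(dJ) μ_J` with `μ_J` probability measures
supported on ground states satisfying the monotonicity property, `ν` a product measure
whose coordinate at the edge `e = {u,v}` is independent with marginal `ν_e`, and let
`A ⊆ ℝ^E × {σ_e = +1}` be an event stable under raising the coupling at `e`.  Then
`M(A ∩ {J_e ≥ λ}) ≥ (1/2) ν_e([λ,∞)) M(A)`. -/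
theorem coupling_raise_estimate {V : Type*} [DecidableEq V] (G : SimpleGraph V)
    [G.LocallyFinite] (u v : V) (huv : G.Adj u v)
    (ν : Measure (V → V → ℝ)) [IsProbabilityMeasure ν]
    (νe : Measure ℝ) [IsProbabilityMeasure νe]
    (hprod : MeasurePreserving
      (fun p : (V → V → ℝ) × ℝ => updateCoupling p.1 u v p.2) (ν.prod νe) ν)
    (μ : (V → V → ℝ) → Measure (V → Bool)) (hμprob : ∀ J, IsProbabilityMeasure (μ J))
    (hsupp : ∀ J, μ J {σ | ¬ IsGroundState G J σ} = 0)
    (hmono : ∀ J : V → V → ℝ, ∀ y : ℝ, J u v ≤ y → ∀ B : Set (V → Bool),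
      (∀ σ ∈ B, spin (σ u) * spin (σ v) = 1) → μ J B ≤ μ (updateCoupling J u v y) B)
    (A : Set ((V → V → ℝ) × (V → Bool))) (hA : MeasurableSet A)
    (hAspin : ∀ p ∈ A, spin (p.2 u) * spin (p.2 v) = 1)
    (hAraise : ∀ p ∈ A, ∀ s : ℝ, p.1 u v ≤ s → (updateCoupling p.1 u v s, p.2) ∈ A)
    (lam : ℝ) :
    (1 / 2 : ℝ≥0∞) * νe (Set.Ici lam) * (∫⁻ J, μ J {σ | (J, σ) ∈ A} ∂ν) ≤
      ∫⁻ J in {J : V → V → ℝ | lam ≤ J u v}, μ J {σ | (J, σ) ∈ A} ∂ν :=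
  coupling_raise_estimate_general u v ν νe hprod μ hmono A hAspin hAraise lam
end

section
/- A domain wall on the half-plane cannot cross the x-axis twice: if σ, σ' are two ground states for couplings J on ℤ×ℕ and there is a finite set of vertices S whose edge boundary ∂S is contained in the interface σΔσ', then ∑_{{x,y}∈∂S} J_{xy}σ_xσ_y = 0. In particular, if the coupling values are such that no finite nonempty signed sum of couplings vanishes, no finite vertex set has its whole boundary inside the interface. -/
open scoped BigOperators

/-- Nearest neighbors of a vertex of the half-plane `ℤ × ℕ` (no neighbor below the
bottom row: for `p.2 = 0` the candidate `(p.1, p.2 - 1) = p` is erased). -/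
def nbrsH (p : ℤ × ℕ) : Finset (ℤ × ℕ) :=
  ({(p.1 + 1, p.2), (p.1 - 1, p.2), (p.1, p.2 + 1), (p.1, p.2 - 1)} : Finset (ℤ × ℕ)).erase p

/-- Edge-boundary energy of a finite vertex set in the half-plane. -/
noncomputable def boundaryEnergyH (J : (ℤ × ℕ) → (ℤ × ℕ) → ℝ) (σ : (ℤ × ℕ) → Bool)
    (S : Finset (ℤ × ℕ)) : ℝ :=
  ∑ x ∈ S, ∑ y ∈ (nbrsH x).filter (fun y => y ∉ S), J x y * spin (σ x) * spin (σ y)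

/-- Ground states on the half-plane `ℤ × ℕ`. -/
def IsGroundStateH (J : (ℤ × ℕ) → (ℤ × ℕ) → ℝ) (σ : (ℤ × ℕ) → Bool) : Prop :=
  ∀ S : Finset (ℤ × ℕ), 0 ≤ boundaryEnergyH J σ S


lemma spin_mul_cases (b c : Bool) : spin b * spin c = 1 ∨ spin b * spin c = -1 := by
  cases b <;> cases c <;> simp [spin] <;> norm_num

lemma spin_neq (b c b' c' : Bool) (h : spin b * spin c ≠ spin b' * spin c') :
    spin b * spin c = -(spin b' * spin c') := by
  cases b <;> cases c <;> cases b' <;> cases c' <;> simp_all [spin] <;> norm_num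

lemma energy_zero_of_interface (J : (ℤ × ℕ) → (ℤ × ℕ) → ℝ) (σ σ' : (ℤ × ℕ) → Bool)
    (hσ : IsGroundStateH J σ) (hσ' : IsGroundStateH J σ') (S : Finset (ℤ × ℕ))
    (h : ∀ x ∈ S, ∀ y ∈ (nbrsH x).filter (fun y => y ∉ S),
        spin (σ x) * spin (σ y) ≠ spin (σ' x) * spin (σ' y)) :
    boundaryEnergyH J σ S = 0 := by
  have key : boundaryEnergyH J σ S = - boundaryEnergyH J σ' S := by
    unfold boundaryEnergyH
    rw [← Finset.sum_neg_distrib]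
    refine Finset.sum_congr rfl fun x hx => ?_
    rw [← Finset.sum_neg_distrib]
    refine Finset.sum_congr rfl fun y hy => ?_
    have hneq := spin_neq _ _ _ _ (h x hx y hy)
    calc J x y * spin (σ x) * spin (σ y) = J x y * (spin (σ x) * spin (σ y)) := by ring
      _ = J x y * (-(spin (σ' x) * spin (σ' y))) := by rw [hneq]
      _ = -(J x y * spin (σ' x) * spin (σ' y)) := by ring
  have h1 := hσ S
  have h2 := hσ' S
  linarith [key]

theorem domainWall_aux : True := trivial

/-- A domain wall cannot enclose a finite region: if `σ, σ'` are ground states and the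
whole edge boundary of a finite set `S` lies in the interface `σ Δ σ'`, then the
boundary energy of `S` vanishes.  In particular, for generic couplings (no finite
nonempty `±1`-signed combination of couplings vanishes), no finite vertex set with
nonempty edge boundary has its whole boundary inside the interface. -/
theorem domainWall_no_finite_enclosure (J : (ℤ × ℕ) → (ℤ × ℕ) → ℝ)
    (hJsymm : ∀ x y, J x y = J y x) (σ σ' : (ℤ × ℕ) → Bool)
    (hσ : IsGroundStateH J σ) (hσ' : IsGroundStateH J σ') :
    (∀ S : Finset (ℤ × ℕ),
      (∀ x ∈ S, ∀ y ∈ (nbrsH x).filter (fun y => y ∉ S),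
        spin (σ x) * spin (σ y) ≠ spin (σ' x) * spin (σ' y)) →
      boundaryEnergyH J σ S = 0) ∧
    ((∀ T : Finset ((ℤ × ℕ) × (ℤ × ℕ)), T.Nonempty →
        ∀ ε : (ℤ × ℕ) × (ℤ × ℕ) → ℝ, (∀ p ∈ T, ε p = 1 ∨ ε p = -1) →
        ∑ p ∈ T, ε p * J p.1 p.2 ≠ 0) →
      ∀ S : Finset (ℤ × ℕ),
        (∃ x ∈ S, ((nbrsH x).filter (fun y => y ∉ S)).Nonempty) →
        ¬ (∀ x ∈ S, ∀ y ∈ (nbrsH x).filter (fun y => y ∉ S),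
            spin (σ x) * spin (σ y) ≠ spin (σ' x) * spin (σ' y))) := by
  constructor
  · exact fun S h => energy_zero_of_interface J σ σ' hσ hσ' S h
  · intro hgen S hS hint
    obtain ⟨x0, hx0, y0, hy0⟩ := hS
    classical
    set B : Finset (ℤ × ℕ) := S.biUnion nbrsH with hB
    set T : Finset ((ℤ × ℕ) × (ℤ × ℕ)) :=
      (S ×ˢ B).filter (fun p => p.2 ∈ nbrsH p.1 ∧ p.2 ∉ S) with hT
    have hT_ne : T.Nonempty := by
      refine ⟨(x0, y0), ?_⟩
      simp only [hT, Finset.mem_filter, Finset.mem_product]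
      have hy0' := Finset.mem_filter.mp hy0
      exact ⟨⟨hx0, Finset.mem_biUnion.mpr ⟨x0, hx0, hy0'.1⟩⟩, hy0'.1, hy0'.2⟩
    set ε : (ℤ × ℕ) × (ℤ × ℕ) → ℝ := fun p => spin (σ p.1) * spin (σ p.2) with hε
    have hεval : ∀ p ∈ T, ε p = 1 ∨ ε p = -1 := fun p _ => spin_mul_cases _ _
    have hsum : ∑ p ∈ T, ε p * J p.1 p.2 = boundaryEnergyH J σ S := by
      unfold boundaryEnergyH
      rw [hT, Finset.sum_filter, Finset.sum_product]
      refine Finset.sum_congr rfl fun x hx => ?_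
      rw [← Finset.sum_filter]
      have hset : B.filter (fun y => y ∈ nbrsH x ∧ y ∉ S)
          = (nbrsH x).filter (fun y => y ∉ S) := by
        ext y
        simp only [Finset.mem_filter, hB, Finset.mem_biUnion]
        constructor
        · rintro ⟨-, hy1, hy2⟩; exact ⟨hy1, hy2⟩
        · rintro ⟨hy1, hy2⟩; exact ⟨⟨x, hx, hy1⟩, hy1, hy2⟩
      rw [hset]
      exact Finset.sum_congr rfl fun y hy => by simp [hε]; ring
    exact hgen T hT_ne ε hεval (hsum.trans (energy_zero_of_interface J σ σ' hσ hσ' S hint))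
end

section
/- Acyclicity of interfaces of ground states: if σ, σ' ∈ 𝒢(J) are ground states on a planar graph G with generic couplings J (no finite nonempty ±1-signed combination of couplings equals zero), then the interface σΔσ' contains no edge set of the form ∂S for a finite nonempty vertex set S with ∂S ≠ ∅; equivalently, the dual representation of σΔσ' contains no cycle. -/
open scoped BigOperators

/-!
If every edge of `∂S` lies in the interface, then `σ'` and `σ` have opposite boundary energies
on `S`. Both are nonnegative for ground states, so the boundary energy of `σ` on `S` vanishes.
But it is a `±1`-signed sum of the couplings of the distinct edges of `∂S`, which genericity
forbids.
-/

lemma spin_mul_spin_eq_one_or_neg_one (a b : Bool) :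
    spin a * spin b = 1 ∨ spin a * spin b = -1 := by
  cases a <;> cases b <;> simp [spin]

lemma spin_mul_spin_eq_neg_of_ne {a b c d : Bool} (h : spin a * spin b ≠ spin c * spin d) :
    spin c * spin d = -(spin a * spin b) := by
  revert h
  cases a <;> cases b <;> cases c <;> cases d <;> norm_num [spin]

namespace SimpleGraph

variable {V : Type*} [DecidableEq V] (G : SimpleGraph V) [G.LocallyFinite]

def edgeBoundary (S : Finset V) : Finset (Σ _ : V, V) :=
  S.sigma fun x => (G.neighborFinset x).filter (· ∉ S)

variable {G} in
@[simp]
lemma mem_edgeBoundary {S : Finset V} {p : Σ _ : V, V} :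
    p ∈ G.edgeBoundary S ↔ p.1 ∈ S ∧ G.Adj p.1 p.2 ∧ p.2 ∉ S := by
  simp [edgeBoundary]

lemma boundaryEnergy_eq_sum_edgeBoundary (J : V → V → ℝ) (σ : V → Bool) (S : Finset V) :
    boundaryEnergy G J σ S =
      ∑ p ∈ G.edgeBoundary S, J p.1 p.2 * spin (σ p.1) * spin (σ p.2) := by
  rw [boundaryEnergy, edgeBoundary, Finset.sum_sigma]

lemma injOn_mk_edgeBoundary (S : Finset V) :
    Set.InjOn (fun p : Σ _ : V, V => s(p.1, p.2)) (G.edgeBoundary S) := by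
  rintro ⟨x, y⟩ hxy ⟨x', y'⟩ hxy' h
  simp only [Finset.mem_coe, mem_edgeBoundary] at hxy hxy'
  rcases Sym2.eq_iff.1 h with ⟨rfl, rfl⟩ | ⟨rfl, -⟩
  · rfl
  · exact absurd hxy.1 hxy'.2.2

lemma boundaryEnergy_eq_neg_of_flip (J : V → V → ℝ) {σ σ' : V → Bool} {S : Finset V}
    (hflip : ∀ x ∈ S, ∀ y, G.Adj x y → y ∉ S →
      spin (σ x) * spin (σ y) ≠ spin (σ' x) * spin (σ' y)) :
    boundaryEnergy G J σ' S = -boundaryEnergy G J σ S := by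
  simp only [boundaryEnergy_eq_sum_edgeBoundary, ← Finset.sum_neg_distrib]
  refine Finset.sum_congr rfl fun p hp => ?_
  rw [mem_edgeBoundary] at hp
  rw [mul_assoc, spin_mul_spin_eq_neg_of_ne (hflip _ hp.1 _ hp.2.1 hp.2.2)]
  ring

lemma boundaryEnergy_ne_zero (J : V → V → ℝ) (hJsymm : ∀ x y, J x y = J y x)
    (hgen : ∀ T : Finset (Sym2 V), T.Nonempty → (↑T : Set (Sym2 V)) ⊆ G.edgeSet →
      ∀ ε : Sym2 V → ℝ, (∀ e ∈ T, ε e = 1 ∨ ε e = -1) →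
      ∑ e ∈ T, ε e * Sym2.lift ⟨J, fun a b => (hJsymm a b)⟩ e ≠ 0)
    (σ : V → Bool) {S : Finset V} (hS : (G.edgeBoundary S).Nonempty) :
    boundaryEnergy G J σ S ≠ 0 := by
  let ε : Sym2 V → ℝ :=
    Sym2.lift ⟨fun x y => spin (σ x) * spin (σ y), fun _ _ => mul_comm _ _⟩
  have key := hgen ((G.edgeBoundary S).image fun p => s(p.1, p.2)) (hS.image _)
    (fun e he => by
      obtain ⟨p, hp, rfl⟩ := Finset.mem_image.1 he
      exact (mem_edgeBoundary.1 hp).2.1)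
    ε (fun e he => by
      obtain ⟨p, -, rfl⟩ := Finset.mem_image.1 he
      exact spin_mul_spin_eq_one_or_neg_one _ _)
  rw [Finset.sum_image (G.injOn_mk_edgeBoundary S)] at key
  rw [boundaryEnergy_eq_sum_edgeBoundary]
  convert key using 2 with p
  simp only [ε, Sym2.lift_mk]
  ring

end SimpleGraph

/-- Acyclicity of interfaces of ground states: for generic couplings (no nonempty
finite `±1`-signed combination of couplings over distinct edges vanishes), the
interface `σ Δ σ'` of two ground states contains no nonempty edge boundary `∂S` of a
finite vertex set; equivalently, its dual representation contains no cycle. -/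
theorem interface_acyclic {V : Type*} [DecidableEq V] (G : SimpleGraph V)
    [G.LocallyFinite] (J : V → V → ℝ) (hJsymm : ∀ x y, J x y = J y x)
    (hgen : ∀ T : Finset (Sym2 V), T.Nonempty → (↑T : Set (Sym2 V)) ⊆ G.edgeSet →
      ∀ ε : Sym2 V → ℝ, (∀ e ∈ T, ε e = 1 ∨ ε e = -1) →
      ∑ e ∈ T, ε e * Sym2.lift ⟨J, fun a b => (hJsymm a b)⟩ e ≠ 0)
    (σ σ' : V → Bool) (hσ : IsGroundState G J σ) (hσ' : IsGroundState G J σ') :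
    ∀ S : Finset V,
      (∃ x ∈ S, ∃ y, G.Adj x y ∧ y ∉ S) →
      ¬ (∀ x ∈ S, ∀ y, G.Adj x y → y ∉ S →
          spin (σ x) * spin (σ y) ≠ spin (σ' x) * spin (σ' y)) := by
  rintro S ⟨x, hx, y, hxy, hy⟩ hflip
  have hS : (G.edgeBoundary S).Nonempty := ⟨⟨x, y⟩, SimpleGraph.mem_edgeBoundary.2 ⟨hx, hxy, hy⟩⟩
  have hzero : boundaryEnergy G J σ S = 0 := by
    have hneg := G.boundaryEnergy_eq_neg_of_flip J hflip
    linarith [hσ S, hσ' S]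
  exact G.boundaryEnergy_ne_zero J hJsymm hgen σ hS hzero
end
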